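/- Let L be a first-order language with only function symbols and let K be a class of quantitative L-algebras closed under isometric L-isomorphisms. Then K is definable by a set of M-equations (each over a finite variable set) within the class of quantitative L-algebras if and only if K is closed under M-products (products with pointwise operations and the sup extended metric), M-subalgebras (L-substructures with the induced metric), and Q-quotients (images of surjective non-expansive L-homomorphisms between quantitative L-algebras). -/

import Mathlib

/-! Equations are preserved by products and subalgebras (coordinatewise and by restriction)
and by surjective non-expansive images (lift a valuation through the surjection). Conversely,
let `A` be quantitative and satisfy every M-equation valid in `K`. For terms `s, t` over the
elements of `A`, let `d_K(s, t)` be the supremum of their distances over all valuations in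
members of `K`; renaming the finitely many variables of `s, t` shows that `A` satisfies
`s =_{d_K(s,t)} t`. One member of `K` per triple `(s, t, c)` with `c < d_K(s, t)`, witnessing
`c`, gives a product in `K` where the distance of the images of `s` and `t` is at least
`d_K(s, t)`. Evaluation in `A` then descends from the subalgebra generated by these images to
a surjective non-expansive homomorphism onto `A`. -/

open FirstOrder FirstOrder.Language
open scoped ENNReal

universe u v w x y z

noncomputable section

namespace MetricAlgebraPaper

/-- The sup extended metric on a product of extended metric spaces. -/
def supEMetric {I : Type*} (A : I → Type*) [∀ i, EMetricSpace (A i)] :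
    EMetricSpace (∀ i, A i) where
  edist f g := ⨆ i, edist (f i) (g i)
  edist_self f := by simp
  edist_comm f g := by simp [edist_comm]
  edist_triangle f g h :=
    iSup_le fun i => (edist_triangle (f i) (g i) (h i)).trans
      (add_le_add (le_iSup (fun j => edist (f j) (g j)) i)
        (le_iSup (fun j => edist (g j) (h j)) i))
  eq_of_edist_eq_zero := by
    intro f g hfg
    funext i
    exact eq_of_edist_eq_zero
      (le_antisymm (le_trans (le_iSup (fun j => edist (f j) (g j)) i) hfg.le) zero_le)

/-- The pointwise `L`-structure on a product. -/
def piStr (L : FirstOrder.Language.{u, v}) {I : Type*} (A : I → Type*)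
    [∀ i, L.Structure (A i)] : L.Structure (∀ i, A i) where
  funMap f a := fun i => Structure.funMap f fun j => a j i
  RelMap r a := ∀ i, Structure.RelMap r fun j => a j i

/-- The term algebra structure on the set of `L`-terms over `X`. -/
instance termStructure (L : FirstOrder.Language.{u, v}) (X : Type w) :
    L.Structure (L.Term X) where
  funMap f ts := Term.func f ts
  RelMap _ _ := False

/-- A map between extended metric spaces is non-expansive if it does not increase distances. -/
def NonExpansive {α : Type*} {β : Type*} [EMetricSpace α] [EMetricSpace β] (f : α → β) : Prop :=
  ∀ a b : α, edist (f a) (f b) ≤ edist a b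

/-- A metric `L`-algebra: a type equipped with an extended metric and an `L`-structure. -/
structure MetricAlg (L : FirstOrder.Language.{u, v}) where
  carrier : Type u
  [emetric : EMetricSpace carrier]
  [str : L.Structure carrier]

attribute [instance] MetricAlg.emetric MetricAlg.str

instance {L : FirstOrder.Language.{u, v}} : CoeSort (MetricAlg L) (Type u) :=
  ⟨MetricAlg.carrier⟩

variable {L : FirstOrder.Language.{u, v}}

/-- Satisfaction of the M-equation `X ⊢ s =_ε t` in a metric `L`-algebra. -/
def Sat (A : MetricAlg L) {X : Type w} (s t : L.Term X) (ε : ℝ≥0∞) : Prop :=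
  ∀ v : X → A, edist (s.realize v) (t.realize v) ≤ ε

/-- A metric `L`-algebra is quantitative if all its operations are non-expansive
for the sup metric on finite powers. -/
def IsQuantitative (A : MetricAlg L) : Prop :=
  ∀ (n : ℕ) (f : L.Functions n) (a b : Fin n → A),
    edist (Structure.funMap f a) (Structure.funMap f b) ≤ ⨆ i, edist (a i) (b i)

/-- The M-product of a family of metric `L`-algebras: the product of the underlying
`L`-structures equipped with the sup extended metric. -/
def MProd {I : Type u} (A : I → MetricAlg L) : MetricAlg L where
  carrier := ∀ i, (A i).carrier
  emetric := supEMetric fun i => (A i).carrier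
  str := piStr L fun i => (A i).carrier

/-- An M-subalgebra of a metric `L`-algebra: an `L`-substructure with the induced metric. -/
def MSub (A : MetricAlg L) (S : L.Substructure A.carrier) : MetricAlg L where
  carrier := S
  emetric := inferInstance
  str := inferInstance

/-- Closure of a class under isometric `L`-isomorphisms. -/
def ClosedUnderIso (K : MetricAlg L → Prop) : Prop :=
  ∀ A B : MetricAlg L, K A → ∀ φ : A ≃[L] B, Isometry ⇑φ → K B

/-- Closure of a class under M-products (with the sup extended metric). -/
def ClosedUnderProd (K : MetricAlg L → Prop) : Prop :=
  ∀ (I : Type u) (A : I → MetricAlg L), (∀ i, K (A i)) → K (MProd A)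

/-- Closure of a class under M-subalgebras (with the induced metric). -/
def ClosedUnderSub (K : MetricAlg L → Prop) : Prop :=
  ∀ A : MetricAlg L, K A → ∀ S : L.Substructure A.carrier, K (MSub A S)

/-- Closure of a class under M-quotients (surjective non-expansive homomorphic images). -/
def ClosedUnderQuot (K : MetricAlg L → Prop) : Prop :=
  ∀ A B : MetricAlg L, K A → ∀ π : A →[L] B, Function.Surjective ⇑π → NonExpansive ⇑π → K B

end MetricAlgebraPaper

namespace FirstOrder.Language

variable {L : Language} {α β M N P : Type*}

namespace Term

theorem relabel_restrictVar [DecidableEq α] (t : L.Term α) (f : t.varFinset → β) (g : β → α)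
    (hgf : ∀ a, g (f a) = a) : (t.restrictVar f).relabel g = t := by
  induction t with
  | var a => exact congrArg var (hgf ⟨a, Finset.mem_singleton_self a⟩)
  | func F ts ih =>
    exact congrArg (func F) (funext fun i => ih i _ fun a => hgf _)

theorem exists_relabel_fin (s t : L.Term α) :
    ∃ (n : ℕ) (s' t' : L.Term (Fin n)) (ρ : Fin n → α),
      ρ.Injective ∧ s'.relabel ρ = s ∧ t'.relabel ρ = t := by
  classical
  let e := (s.varFinset ∪ t.varFinset).equivFin
  refine ⟨_, s.restrictVar fun a => e ⟨a, Finset.mem_union_left _ a.2⟩,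
    t.restrictVar fun a => e ⟨a, Finset.mem_union_right _ a.2⟩, Subtype.val ∘ e.symm,
    Subtype.val_injective.comp e.symm.injective, ?_, ?_⟩ <;>
  exact relabel_restrictVar _ _ _ fun a => by simp

end Term

namespace Hom

variable [L.Structure M] [L.Structure N] [L.Structure P] [L.IsAlgebraic]

def rangeLift (φ : M →[L] N) (ψ : M →[L] P) (h : ∀ a b, φ a = φ b → ψ a = ψ b) :
    φ.range →[L] P where
  toFun y := ψ (mem_range.1 y.2).choose
  map_fun' f y := by
    refine (h _ _ ?_).trans (ψ.map_fun f _)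
    rw [(mem_range.1 (Structure.funMap f y).2).choose_spec, φ.map_fun]
    exact congrArg (Structure.funMap f) (funext fun i => (mem_range.1 (y i).2).choose_spec.symm)
  map_rel' r := isEmptyElim r

theorem rangeLift_apply (φ : M →[L] N) (ψ : M →[L] P) (h : ∀ a b, φ a = φ b → ψ a = ψ b)
    (a : M) : φ.rangeLift ψ h ⟨φ a, mem_range_self φ a⟩ = ψ a :=
  h _ _ (mem_range.1 (mem_range_self φ a)).choose_spec

theorem rangeLift_surjective (φ : M →[L] N) {ψ : M →[L] P}
    (h : ∀ a b, φ a = φ b → ψ a = ψ b) (hψ : Function.Surjective ψ) :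
    Function.Surjective (φ.rangeLift ψ h) := fun p =>
  let ⟨a, ha⟩ := hψ p
  ⟨_, (rangeLift_apply φ ψ h a).trans ha⟩

end Hom

end FirstOrder.Language

namespace MetricAlgebraPaper

variable {L : FirstOrder.Language.{u, v}}

theorem nonExpansive_rangeLift [L.IsAlgebraic] {M N P : Type*} [L.Structure M] [L.Structure N]
    [L.Structure P] [EMetricSpace N] [EMetricSpace P] (φ : M →[L] N) (ψ : M →[L] P)
    (h : ∀ a b, φ a = φ b → ψ a = ψ b) (hle : ∀ a b, edist (ψ a) (ψ b) ≤ edist (φ a) (φ b)) :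
    NonExpansive (φ.rangeLift ψ h) := by
  rintro ⟨_, a, rfl⟩ ⟨_, b, rfl⟩
  simp only [Hom.rangeLift_apply]
  exact hle a b

def realizeHom {X : Type w} {M : Type*} [L.Structure M] (v : X → M) : L.Term X →[L] M where
  toFun t := t.realize v
  map_fun' _ _ := rfl
  map_rel' _ _ h := h.elim

theorem realizeHom_id_surjective {M : Type*} [L.Structure M] :
    Function.Surjective (realizeHom (L := L) (id : M → M)) :=
  fun a => ⟨Term.var a, rfl⟩

namespace MProd

variable {I : Type u} (A : I → MetricAlg L)

theorem edist_eq (f g : MProd A) : edist f g = ⨆ i, edist (f i) (g i) := rfl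

def proj (i : I) : MProd A →[L] A i where
  toFun f := f i
  map_fun' _ _ := rfl
  map_rel' _ _ h := h i

theorem realize_apply {X : Type w} (t : L.Term X) (v : X → MProd A) (i : I) :
    (t.realize v : MProd A) i = t.realize fun x => v x i :=
  (HomClass.realize_term (proj A i)).symm

end MProd

theorem IsQuantitative.mprod {I : Type u} {A : I → MetricAlg L} (hA : ∀ i, IsQuantitative (A i)) :
    IsQuantitative (MProd A) := fun n f a b =>
  iSup_le fun i => (hA i n f _ _).trans <|
    iSup_mono fun k => le_iSup (fun j => edist (a k j) (b k j)) i

theorem IsQuantitative.msub {A : MetricAlg L} (hA : IsQuantitative A) (S : L.Substructure A) :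
    IsQuantitative (MSub A S) := fun n f a b =>
  hA n f (fun k => (a k).1) fun k => (b k).1

theorem Sat.mprod {I : Type u} {A : I → MetricAlg L} {X : Type w} {s t : L.Term X} {ε : ℝ≥0∞}
    (hA : ∀ i, Sat (A i) s t ε) : Sat (MProd A) s t ε := fun v => by
  rw [MProd.edist_eq]
  refine iSup_le fun i => ?_
  rw [MProd.realize_apply, MProd.realize_apply]
  exact hA i _

theorem Sat.msub {A : MetricAlg L} {X : Type w} {s t : L.Term X} {ε : ℝ≥0∞} (hA : Sat A s t ε)
    (S : L.Substructure A) : Sat (MSub A S) s t ε := fun (v : X → S) => by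
  have h := hA (S.subtype ∘ v)
  rwa [HomClass.realize_term, HomClass.realize_term] at h

theorem Sat.of_surjective {A B : MetricAlg L} {X : Type w} {s t : L.Term X} {ε : ℝ≥0∞}
    (hA : Sat A s t ε) (π : A →[L] B) (hπ : Function.Surjective π) (hπ' : NonExpansive π) :
    Sat B s t ε := fun v => by
  obtain ⟨u, rfl⟩ : ∃ u : X → A, π ∘ u = v := ⟨_, funext fun x => (hπ (v x)).choose_spec⟩
  rw [HomClass.realize_term, HomClass.realize_term]
  exact (hπ' _ _).trans (hA u)

variable (K : MetricAlg L → Prop)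

def eqTheory : Set (Σ n : ℕ, L.Term (Fin n) × L.Term (Fin n) × ℝ≥0∞) :=
  {e | ∀ B : MetricAlg L, K B → Sat B e.2.1 e.2.2.1 e.2.2.2}

/-- The least `ε` such that `X ⊢ s =_ε t` holds throughout `K`. -/
def classDist {X : Type w} (s t : L.Term X) : ℝ≥0∞ :=
  ⨆ (B : MetricAlg L) (_ : K B) (v : X → B), edist (s.realize v) (t.realize v)

variable {K}

theorem sat_classDist {X : Type w} (s t : L.Term X) {B : MetricAlg L} (hB : K B) :
    Sat B s t (classDist K s t) := fun v =>
  le_iSup_of_le B <| le_iSup_of_le hB <|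
    le_iSup (fun v : X → B => edist (s.realize v) (t.realize v)) v

theorem classDist_le_relabel {X : Type w} {Y : Type x} (s t : L.Term X) {ρ : X → Y}
    (hρ : ρ.Injective) : classDist K s t ≤ classDist K (s.relabel ρ) (t.relabel ρ) := by
  refine iSup_le fun B => iSup_le fun hB => iSup_le fun v => ?_
  -- `B` is nonempty as soon as a term is realized in it, so `v` extends along `ρ`.
  have hv : Function.extend ρ v (fun _ => s.realize v) ∘ ρ = v := Function.extend_comp hρ _ _
  have := sat_classDist (s.relabel ρ) (t.relabel ρ) hB (Function.extend ρ v fun _ => s.realize v)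
  rwa [Term.realize_relabel, Term.realize_relabel, hv] at this

theorem edist_realize_le_classDist {A : MetricAlg L}
    (hA : ∀ e ∈ eqTheory K, Sat A e.2.1 e.2.2.1 e.2.2.2) {X : Type w} (s t : L.Term X)
    (v : X → A) : edist (s.realize v) (t.realize v) ≤ classDist K s t := by
  obtain ⟨n, s, t, ρ, hρ, rfl, rfl⟩ := s.exists_relabel_fin t
  rw [Term.realize_relabel, Term.realize_relabel]
  exact (hA ⟨n, s, t, classDist K s t⟩ (fun B hB => sat_classDist s t hB) (v ∘ ρ)).trans
    (classDist_le_relabel s t hρ)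

theorem exists_classDist_le_edist (hP : ClosedUnderProd K) (X : Type u) :
    ∃ (P : MetricAlg L) (_ : K P) (v : X → P),
      ∀ s t : L.Term X, classDist K s t ≤ edist (s.realize v) (t.realize v) := by
  choose B hB w hw using fun j : {j : L.Term X × L.Term X × ULift.{u} ℝ≥0∞ //
      j.2.2.down < classDist K j.1 j.2.1} => by simpa only [classDist, lt_iSup_iff] using j.2
  refine ⟨MProd B, hP _ B hB, fun x j => w j x, fun s t => le_of_forall_lt fun c hc => ?_⟩
  rw [MProd.edist_eq]
  refine (hw ⟨(s, t, ⟨c⟩), hc⟩).trans_le (le_iSup_of_le ⟨(s, t, ⟨c⟩), hc⟩ ?_)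
  exact (congrArg₂ edist (MProd.realize_apply B s _ _) (MProd.realize_apply B t _ _)).ge

theorem mem_of_sat_eqTheory [L.IsAlgebraic] (hP : ClosedUnderProd K) (hS : ClosedUnderSub K)
    (hQuot : ∀ A B : MetricAlg L, K A → IsQuantitative B →
      ∀ π : A →[L] B, Function.Surjective ⇑π → NonExpansive ⇑π → K B)
    {A : MetricAlg L} (hA : IsQuantitative A)
    (hsat : ∀ e ∈ eqTheory K, Sat A e.2.1 e.2.2.1 e.2.2.2) : K A := by
  obtain ⟨P, hKP, v, hv⟩ := exists_classDist_le_edist hP A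
  let φ := realizeHom (L := L) v
  let ψ := realizeHom (L := L) (id : A → A)
  have hle : ∀ s t, edist (ψ s) (ψ t) ≤ edist (φ s) (φ t) := fun s t =>
    (edist_realize_le_classDist hsat s t id).trans (hv s t)
  have hker : ∀ s t, φ s = φ t → ψ s = ψ t := fun s t hst =>
    edist_le_zero.1 ((hle s t).trans (by rw [hst, edist_self]))
  exact hQuot (MSub P φ.range) A (hS P hKP _) hA (φ.rangeLift ψ hker)
    (φ.rangeLift_surjective hker realizeHom_id_surjective) (nonExpansive_rangeLift φ ψ hker hle)

theorem quantitative_variety_iff_closed_general (L : FirstOrder.Language.{u, v}) [L.IsAlgebraic]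
    (K : MetricAlg L → Prop)
    (hQ : ∀ A : MetricAlg L, K A → IsQuantitative A) :
    (∃ I : Set (Σ n : ℕ, L.Term (Fin n) × L.Term (Fin n) × ℝ≥0∞),
        ∀ A : MetricAlg L, IsQuantitative A →
          (K A ↔ ∀ e ∈ I, Sat A e.2.1 e.2.2.1 e.2.2.2)) ↔
      (ClosedUnderProd K ∧ ClosedUnderSub K ∧
        ∀ A B : MetricAlg L, K A → IsQuantitative B →
          ∀ π : A →[L] B, Function.Surjective ⇑π → NonExpansive ⇑π → K B) := by
  constructor
  · rintro ⟨E, hE⟩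
    have hsat : ∀ A, K A → ∀ e ∈ E, Sat A e.2.1 e.2.2.1 e.2.2.2 := fun A hA =>
      (hE A (hQ A hA)).1 hA
    refine ⟨fun I A hA => ?_, fun A hA S => ?_, fun A B hA hB π hπ hπ' => ?_⟩
    · exact (hE _ (.mprod fun i => hQ _ (hA i))).2 fun e he =>
        .mprod fun i => hsat _ (hA i) e he
    · exact (hE _ ((hQ A hA).msub S)).2 fun e he => (hsat A hA e he).msub S
    · exact (hE B hB).2 fun e he => (hsat A hA e he).of_surjective π hπ hπ'
  · rintro ⟨hP, hS, hQt⟩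
    exact ⟨eqTheory K, fun A hA =>
      ⟨fun hKA e he => he A hKA, mem_of_sat_eqTheory hP hS hQt hA⟩⟩

/-- **quantitative variety theorem.** A class `K` of quantitative
`L`-algebras closed under isometric isomorphisms is definable by a set of M-equations
(each over a finite variable set) within the class of quantitative `L`-algebras iff it
is closed under M-products, M-subalgebras and Q-quotients (surjective non-expansive
homomorphic images that are quantitative algebras). -/
theorem quantitative_variety_iff_closed (L : FirstOrder.Language.{u, v}) [L.IsAlgebraic]
    (K : MetricAlg L → Prop)
    (hQ : ∀ A : MetricAlg L, K A → IsQuantitative A)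
    (hIso : ClosedUnderIso K) :
    (∃ I : Set (Σ n : ℕ, L.Term (Fin n) × L.Term (Fin n) × ℝ≥0∞),
        ∀ A : MetricAlg L, IsQuantitative A →
          (K A ↔ ∀ e ∈ I, Sat A e.2.1 e.2.2.1 e.2.2.2)) ↔
      (ClosedUnderProd K ∧ ClosedUnderSub K ∧
        ∀ A B : MetricAlg L, K A → IsQuantitative B →
          ∀ π : A →[L] B, Function.Surjective ⇑π → NonExpansive ⇑π → K B) :=
  quantitative_variety_iff_closed_general L K hQ

end MetricAlgebraPaper
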